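/- Let A be the 2×2 complex matrix with A_{11} = 1, A_{12} = A_{21} = 1+i, A_{22} = 2, and let T = conj(A) ⊗ A be the order-4 dimension-2 tensor with entries T_{i_1i_2i_3i_4} = conj(A_{i_1i_2}) A_{i_3i_4}. Then T is conjugate partial-symmetric, the standard square matricization M(T) (the 4×4 matrix with rows indexed by (i_1,i_2) and columns by (i_3,i_4)) is a rank-one Hermitian matrix, but rank(T) ≥ 2. -/

import Mathlib

open scoped BigOperators
open ComplexConjugate

/-- Partial-symmetric tensor of order `2d`, dimension `n` (two-block index form). -/
def IsPS {n d : ℕ} (T : (Fin d → Fin n) → (Fin d → Fin n) → ℂ) : Prop :=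
  ∀ (σ τ : Equiv.Perm (Fin d)) (i j : Fin d → Fin n), T (i ∘ σ) (j ∘ τ) = T i j

/-- Conjugate partial-symmetric tensor. -/
def IsCPS {n d : ℕ} (T : (Fin d → Fin n) → (Fin d → Fin n) → ℂ) : Prop :=
  IsPS T ∧ ∀ i j, T i j = conj (T j i)

/-- The rank of `T`. -/
noncomputable def tRank {n d : ℕ} (T : (Fin d → Fin n) → (Fin d → Fin n) → ℂ) : ℕ :=
  sInf {r : ℕ | ∃ a b : Fin r → Fin d → Fin n → ℂ,
    ∀ i j, T i j = ∑ s, (∏ k, a s k (i k)) * ∏ k, b s k (j k)}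

/-- The matrix `A` with `A₁₁ = 1`, `A₁₂ = A₂₁ = 1 + i`, `A₂₂ = 2`. -/
def A13 : Matrix (Fin 2) (Fin 2) ℂ :=
  !![1, 1 + Complex.I; 1 + Complex.I, 2]

/-- The tensor `T = conj(A) ⊗ A`, with entries `T_{i₁i₂i₃i₄} = conj(A_{i₁i₂}) A_{i₃i₄}`. -/
def T13 : (Fin 2 → Fin 2) → (Fin 2 → Fin 2) → ℂ :=
  fun p q => conj (A13 (p 0) (p 1)) * A13 (q 0) (q 1)

/-- The standard square matricization `M(T)`: rows indexed by `(i₁,i₂)`, columns by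
`(i₃,i₄)`. -/
def M13 : Matrix (Fin 2 → Fin 2) (Fin 2 → Fin 2) ℂ :=
  Matrix.of fun p q => T13 p q

/-!
Viewed as a 4×4 matrix, `T = conj(A) ⊗ A` is `vecMulVec (star a) a` for the flattening `a` of
`A`, hence Hermitian of rank one; the symmetry of `A` gives the partial symmetry. As a tensor,
however, every slice `T(·,·,j)` is `A_j · conj(A)`, of determinant `A_j² · conj(det A)`, which is
nonzero for some `j` because `det A = 2 - 2i`. A rank-one tensor `a ⊗ b ⊗ c ⊗ d` has slices
`(c ⊗ d)_j · a ⊗ b` of determinant zero, and a tensor of rank zero vanishes.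
-/

open Matrix

lemma Matrix.rank_ne_zero {m n K : Type*} [Fintype n] [DecidableEq n] [Field K]
    {M : Matrix m n K} (hM : M ≠ 0) : M.rank ≠ 0 := by
  rw [Matrix.rank, Ne, Submodule.finrank_eq_zero, LinearMap.range_eq_bot, ← toLin'_apply']
  exact (LinearEquiv.map_ne_zero_iff _).mpr hM

lemma Matrix.rank_vecMulVec_eq_one {n K : Type*} [Fintype n] [DecidableEq n] [Field K]
    {w : n → K} {v : n → K} (hw : w ≠ 0) (hv : v ≠ 0) : (vecMulVec w v).rank = 1 :=
  le_antisymm (rank_vecMulVec_le w v) (Nat.one_le_iff_ne_zero.mpr (rank_ne_zero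
    (vecMulVec_ne_zero hw hv)))

lemma Matrix.IsSymm.apply_comp_perm {m α : Type*} {A : Matrix m m α} (hA : A.IsSymm)
    (σ : Equiv.Perm (Fin 2)) (p : Fin 2 → m) : A (p (σ 0)) (p (σ 1)) = A (p 0) (p 1) := by
  obtain rfl | rfl : σ = 1 ∨ σ = Equiv.swap 0 1 := by revert σ; decide
  · rfl
  · exact hA.apply _ _

section RankOneDecomposition

variable {n d : ℕ}

def HasRankOneDecomposition (T : (Fin d → Fin n) → (Fin d → Fin n) → ℂ) (r : ℕ) : Prop :=
  ∃ a b : Fin r → Fin d → Fin n → ℂ,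
    ∀ i j, T i j = ∑ s, (∏ k, a s k (i k)) * ∏ k, b s k (j k)

variable {T : (Fin d → Fin n) → (Fin d → Fin n) → ℂ}

lemma hasRankOneDecomposition_card {ι : Type*} [Fintype ι] (a b : ι → Fin d → Fin n → ℂ)
    (h : ∀ i j, T i j = ∑ s, (∏ k, a s k (i k)) * ∏ k, b s k (j k)) :
    HasRankOneDecomposition T (Fintype.card ι) := by
  let e := Fintype.equivFin ι
  refine ⟨a ∘ e.symm, b ∘ e.symm, fun i j => ?_⟩
  rw [h, ← e.symm.sum_comp]
  rfl

lemma le_tRank {m r : ℕ} (hr : HasRankOneDecomposition T r)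
    (hm : ∀ r < m, ¬HasRankOneDecomposition T r) : m ≤ tRank T :=
  not_lt.mp fun h => hm _ h (Nat.sInf_mem (s := {r | HasRankOneDecomposition T r}) ⟨r, hr⟩)

lemma HasRankOneDecomposition.eq_zero (h : HasRankOneDecomposition T 0) : T = 0 := by
  obtain ⟨a, b, hab⟩ := h
  ext i j
  simp [hab]

lemma HasRankOneDecomposition.mul_cross {T : (Fin 2 → Fin n) → (Fin 2 → Fin n) → ℂ}
    (h : HasRankOneDecomposition T 1) (x x' y y' : Fin n) (j : Fin 2 → Fin n) :
    T ![x, y] j * T ![x', y'] j = T ![x, y'] j * T ![x', y] j := by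
  obtain ⟨a, b, hab⟩ := h
  simp only [hab, Fin.sum_univ_one, Fin.prod_univ_two, cons_val_zero, cons_val_one]
  ring

end RankOneDecomposition

section ConjKron

variable {n : ℕ}

def conjKron (A : Matrix (Fin n) (Fin n) ℂ) : (Fin 2 → Fin n) → (Fin 2 → Fin n) → ℂ :=
  fun p q => conj (A (p 0) (p 1)) * A (q 0) (q 1)

def flatten (A : Matrix (Fin n) (Fin n) ℂ) : (Fin 2 → Fin n) → ℂ :=
  fun q => A (q 0) (q 1)

lemma of_conjKron (A : Matrix (Fin n) (Fin n) ℂ) :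
    Matrix.of (conjKron A) = vecMulVec (star (flatten A)) (flatten A) :=
  rfl

lemma isHermitian_of_conjKron (A : Matrix (Fin n) (Fin n) ℂ) :
    (Matrix.of (conjKron A)).IsHermitian := by
  rw [IsHermitian, of_conjKron, conjTranspose_vecMulVec, star_star]

lemma flatten_ne_zero {A : Matrix (Fin n) (Fin n) ℂ} (hA : A ≠ 0) : flatten A ≠ 0 := by
  contrapose! hA
  ext x y
  simpa [flatten] using congrFun hA ![x, y]

lemma rank_of_conjKron {A : Matrix (Fin n) (Fin n) ℂ} (hA : A ≠ 0) :
    (Matrix.of (conjKron A)).rank = 1 := by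
  rw [of_conjKron]
  exact rank_vecMulVec_eq_one (star_ne_zero.mpr (flatten_ne_zero hA)) (flatten_ne_zero hA)

lemma isCPS_conjKron {A : Matrix (Fin n) (Fin n) ℂ} (hA : A.IsSymm) : IsCPS (conjKron A) := by
  refine ⟨fun σ τ i j => ?_, fun i j => ?_⟩
  · simp only [conjKron, Function.comp_apply, hA.apply_comp_perm]
  · simp only [conjKron, map_mul, Complex.conj_conj, mul_comm]

lemma hasRankOneDecomposition_conjKron (A : Matrix (Fin n) (Fin n) ℂ) :
    HasRankOneDecomposition (conjKron A) (n * n) := by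
  -- expand `conj A (p 0) (p 1) = ∑ x, δ (p 0) x * conj A x (p 1)`, and `A` likewise
  have h := hasRankOneDecomposition_card (T := conjKron A)
    (fun (s : Fin n × Fin n) k i => if k = 0 then (if i = s.1 then 1 else 0) else conj (A s.1 i))
    (fun s k j => if k = 0 then (if j = s.2 then 1 else 0) else A s.2 j)
    (fun p q => by simp [conjKron, Fin.prod_univ_two, Fintype.sum_prod_type])
  simpa using h

lemma two_le_tRank_conjKron {A : Matrix (Fin 2) (Fin 2) ℂ} (hA : A.det ≠ 0) :
    2 ≤ tRank (conjKron A) := by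
  obtain ⟨x, y, hxy⟩ : ∃ x y, A x y ≠ 0 := by
    by_contra! h
    exact hA (by simp [show A = 0 from Matrix.ext h])
  refine le_tRank (hasRankOneDecomposition_conjKron A) fun r hr hdec => ?_
  interval_cases r
  · have := congrFun (congrFun hdec.eq_zero ![x, y]) ![x, y]
    simp [conjKron, hxy] at this
  · have hcross := hdec.mul_cross 0 1 0 1 ![x, y]
    have hdet : conj A.det * A x y ^ 2 = 0 := by
      simp only [conjKron, cons_val_zero, cons_val_one] at hcross
      rw [det_fin_two, map_sub, map_mul, map_mul]
      linear_combination hcross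
    simp [hA, hxy] at hdet

end ConjKron

lemma isSymm_A13 : A13.IsSymm :=
  IsSymm.ext fun i j => by fin_cases i <;> fin_cases j <;> rfl

lemma det_A13 : A13.det = 2 - 2 * Complex.I := by
  rw [A13, det_fin_two_of]
  linear_combination (-1 : ℂ) * Complex.I_sq

/-- `T13` is CPS, its standard square matricization is a rank-one Hermitian matrix,
but `rank(T13) ≥ 2`. -/
theorem stmt13 : IsCPS T13 ∧ M13.IsHermitian ∧ M13.rank = 1 ∧ 2 ≤ tRank T13 := by
  have hdet : A13.det ≠ 0 := fun h => by simpa [det_A13] using congrArg Complex.im h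
  have hA : A13 ≠ 0 := fun h => hdet (by simp [h])
  exact ⟨isCPS_conjKron isSymm_A13, isHermitian_of_conjKron A13, rank_of_conjKron hA,
    two_le_tRank_conjKron hdet⟩
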